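/- (Theorem 1, case a_- < a ≤ 1/2: the equation determining η) Let b ∈ (0,1), a_- = (1 - √(1 - b²))/2, and a_- < a ≤ 1/2. Define G(η) = 2a·(2·arctan(√(-η² - 4aη)/(-η)) - π) - √(-η² - 4aη) for η ∈ (-4a, 0), and q(a) = 2·[ 2b·arctan( -√(4a - 4a² - b²)/(2 - 2a + b) ) + (1-b)·arctan( b√(4a - 4a² - b²)/(2 - 2a - b²) ) + 2a·arctan( √(4a - 4a² - b²)/b ) - aπ ]. Then there exists a unique η ∈ (-4a, 0) such that G(η) = q(a). -/

import Mathlib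

/-- `G(η) = 2a(2 arctan(√(-η²-4aη)/(-η)) - π) - √(-η²-4aη)`. -/
noncomputable def Gfun (a η : ℝ) : ℝ :=
  2 * a * (2 * Real.arctan (Real.sqrt (-η ^ 2 - 4 * a * η) / (-η)) - Real.pi) -
    Real.sqrt (-η ^ 2 - 4 * a * η)

/-- `q(a) = 2[2b arctan(-√(4a-4a²-b²)/(2-2a+b)) + (1-b) arctan(b√(4a-4a²-b²)/(2-2a-b²))
+ 2a arctan(√(4a-4a²-b²)/b) - aπ]`. -/
noncomputable def qfun (b a : ℝ) : ℝ :=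
  2 * (2 * b * Real.arctan (-Real.sqrt (4 * a - 4 * a ^ 2 - b ^ 2) / (2 - 2 * a + b)) +
    (1 - b) * Real.arctan (b * Real.sqrt (4 * a - 4 * a ^ 2 - b ^ 2) / (2 - 2 * a - b ^ 2)) +
    2 * a * Real.arctan (Real.sqrt (4 * a - 4 * a ^ 2 - b ^ 2) / b) - a * Real.pi)

open Real Set Filter Topology

lemma arctan_pos' {x : ℝ} (hx : 0 < x) : 0 < Real.arctan x := by
  have := Real.arctan_strictMono hx
  rwa [Real.arctan_zero] at this

lemma G_hasDerivAt (a η : ℝ) (ha : 0 < a) (h1 : -4 * a < η) (h2 : η < 0) :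
    HasDerivAt (Gfun a) ((η + 4 * a) / Real.sqrt (-η ^ 2 - 4 * a * η)) η := by
  have hg : 0 < -η ^ 2 - 4 * a * η := by nlinarith
  set s := Real.sqrt (-η ^ 2 - 4 * a * η) with hs
  have hspos : 0 < s := Real.sqrt_pos.2 hg
  have hs2 : s ^ 2 = -η ^ 2 - 4 * a * η := Real.sq_sqrt hg.le
  have hne : η ≠ 0 := h2.ne
  have hpoly : HasDerivAt (fun η : ℝ => -η ^ 2 - 4 * a * η) (-(2 * η) - 4 * a) η := by
    have := (((hasDerivAt_pow 2 η).neg).sub (((hasDerivAt_id η).const_mul (4 * a))))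
    exact this.congr_deriv (by norm_num)
  have hsqrt : HasDerivAt (fun η : ℝ => Real.sqrt (-η ^ 2 - 4 * a * η))
      ((-(2 * η) - 4 * a) / (2 * s)) η := hpoly.sqrt (by rw [← hs2]; positivity)
  have hden : HasDerivAt (fun η : ℝ => -η) (-1) η := (hasDerivAt_id η).neg
  have hquot := hsqrt.div hden (by simpa using hne)
  have harc := hquot.arctan
  have hmain := ((harc.const_mul 2).sub_const Real.pi).const_mul (2 * a)
  have hfull := hmain.sub hsqrt
  refine hfull.congr_deriv ?_
  symm
  simp only [Pi.div_apply]
  rw [← hs]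
  have h1d : (1 : ℝ) + (s / -η) ^ 2 = -4 * a / η := by
    field_simp
    linear_combination hs2
  rw [h1d]
  field_simp
  ring_nf
  linear_combination 8 * hs2

lemma q_hasDerivAt (b x : ℝ) (hb0 : 0 < b) (hb1 : b < 1) (hx2 : x ≤ 1 / 2)
    (hg : 0 < 4 * x - 4 * x ^ 2 - b ^ 2) :
    HasDerivAt (qfun b)
      (4 * Real.arctan (Real.sqrt (4 * x - 4 * x ^ 2 - b ^ 2) / b) - 2 * Real.pi) x := by
  have hx0 : 0 < x := by nlinarith
  have hx1 : x < 1 := by nlinarith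
  set r := Real.sqrt (4 * x - 4 * x ^ 2 - b ^ 2) with hr
  have hrpos : 0 < r := Real.sqrt_pos.2 hg
  have hr2 : r ^ 2 = 4 * x - 4 * x ^ 2 - b ^ 2 := Real.sq_sqrt hg.le
  have hE : (0:ℝ) < 2 - 2 * x + b := by linarith
  have hD : (0:ℝ) < 2 - 2 * x - b ^ 2 := by nlinarith
  have hgd : HasDerivAt (fun y : ℝ => 4 * y - 4 * y ^ 2 - b ^ 2) (4 - 8 * x) x := by
    have := (((hasDerivAt_id x).const_mul (4:ℝ)).sub ((hasDerivAt_pow 2 x).const_mul 4)).sub_const (b ^ 2)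
    exact this.congr_deriv (by push_cast; ring)
  have hrd : HasDerivAt (fun y : ℝ => Real.sqrt (4 * y - 4 * y ^ 2 - b ^ 2))
      ((4 - 8 * x) / (2 * r)) x := hgd.sqrt (by rw [← hr2]; positivity)
  have hEd : HasDerivAt (fun y : ℝ => 2 - 2 * y + b) (-2) x := by
    have := (((hasDerivAt_id x).const_mul (2:ℝ)).const_sub 2).add_const b
    exact this.congr_deriv (by push_cast; ring)
  have hDd : HasDerivAt (fun y : ℝ => 2 - 2 * y - b ^ 2) (-2) x := by
    have := (((hasDerivAt_id x).const_mul (2:ℝ)).const_sub 2).sub_const (b ^ 2)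
    exact this.congr_deriv (by push_cast; ring)
  have hA := ((hrd.neg).div hEd hE.ne').arctan
  have hB := ((hrd.const_mul b).div hDd hD.ne').arctan
  have hC := (hrd.div_const b).arctan
  have hprod := ((hasDerivAt_id x).const_mul (2:ℝ)).mul hC
  have hsum := ((((hA.const_mul (2*b)).add (hB.const_mul (1-b))).add hprod).sub
    ((hasDerivAt_id x).mul_const Real.pi)).const_mul (2:ℝ)
  refine hsum.congr_deriv ?_
  symm
  simp only [Pi.div_apply, Pi.neg_apply, id_eq]
  rw [← hr]
  have hrne : r ≠ 0 := hrpos.ne'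
  have hbne : b ≠ 0 := hb0.ne'
  have hxne : x ≠ 0 := hx0.ne'
  have h1xne : 1 - x ≠ 0 := by linarith
  have hEne : 2 - 2*x + b ≠ 0 := hE.ne'
  have hDne : 2 - 2*x - b^2 ≠ 0 := hD.ne'
  have hAval : (1/(1 + (-r/(2-2*x+b))^2) * ((-((4-8*x)/(2*r)) * (2-2*x+b) - -r * (-2))/(2-2*x+b)^2)) = -((2-2*x-b)*x)/(2*r*x*(1-x)) := by
    field_simp
    linear_combination ((2*(1-x)-b - 4*(1-x))/(2*(1-x)+b)^2) * hr2 - (2*(1-x)-b) * mul_inv_cancel₀ (pow_ne_zero 2 (show 2*(1-x)+b ≠ 0 by linarith))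
  have hBval : (1/(1 + (b*r/(2-2*x-b^2))^2) * ((b*((4-8*x)/(2*r)) * (2-2*x-b^2) - b*r*(-2))/(2-2*x-b^2)^2)) = 2*b*x/(2*r*x*(1-x)) := by
    field_simp
    linear_combination ((4*(1-x) - 2*b^2)/(2*(1-x)-b^2)^2) * hr2 + 2 * mul_inv_cancel₀ (pow_ne_zero 2 (show 2*(1-x)-b^2 ≠ 0 by nlinarith))
  have hCval : (1/(1 + (r/b)^2) * ((4-8*x)/(2*r)/b)) = b*(1-2*x)/(2*r*x*(1-x)) := by
    field_simp
    rw [hr2]; field_simp; ring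
  linear_combination (-4*b)*hAval + (-2*(1-b))*hBval + (-4*x)*hCval

lemma qfun_continuousOn (b : ℝ) (hb0 : 0 < b) (hb1 : b < 1) :
    ContinuousOn (qfun b) (Set.Iic (1 / 2 : ℝ)) := by
  have hsq : Continuous fun x : ℝ => Real.sqrt (4 * x - 4 * x ^ 2 - b ^ 2) :=
    Real.continuous_sqrt.comp (by continuity)
  have hEne : ∀ x ∈ Set.Iic (1 / 2 : ℝ), (2 - 2 * x + b) ≠ 0 := fun x hx => by
    simp only [Set.mem_Iic] at hx; nlinarith
  have hDne : ∀ x ∈ Set.Iic (1 / 2 : ℝ), (2 - 2 * x - b ^ 2) ≠ 0 := fun x hx => by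
    simp only [Set.mem_Iic] at hx; nlinarith
  have h1 : ContinuousOn (fun x : ℝ =>
      Real.arctan (-Real.sqrt (4 * x - 4 * x ^ 2 - b ^ 2) / (2 - 2 * x + b)))
      (Set.Iic (1 / 2 : ℝ)) :=
    Real.continuous_arctan.comp_continuousOn
      ((hsq.neg.continuousOn).div (by continuity : Continuous fun x : ℝ => 2 - 2 * x + b).continuousOn hEne)
  have h2 : ContinuousOn (fun x : ℝ =>
      Real.arctan (b * Real.sqrt (4 * x - 4 * x ^ 2 - b ^ 2) / (2 - 2 * x - b ^ 2)))
      (Set.Iic (1 / 2 : ℝ)) :=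
    Real.continuous_arctan.comp_continuousOn
      (((continuous_const.mul hsq).continuousOn).div
        (by continuity : Continuous fun x : ℝ => 2 - 2 * x - b ^ 2).continuousOn hDne)
  have h3 : Continuous fun x : ℝ =>
      Real.arctan (Real.sqrt (4 * x - 4 * x ^ 2 - b ^ 2) / b) :=
    Real.continuous_arctan.comp (hsq.div_const b)
  unfold qfun
  apply continuousOn_const.mul
  apply ContinuousOn.sub
  · apply ContinuousOn.add
    apply ContinuousOn.add
    · exact continuousOn_const.mul h1
    · exact continuousOn_const.mul h2
    · exact (continuousOn_const.mul continuousOn_id).mul h3.continuousOn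
  · exact continuousOn_id.mul continuousOn_const

lemma q_bounds (a b : ℝ) (hb : b ∈ Set.Ioo (0 : ℝ) 1)
    (ha1 : (1 - Real.sqrt (1 - b ^ 2)) / 2 < a) (ha2 : a ≤ 1 / 2) :
    -(2 * a * Real.pi) < qfun b a ∧ qfun b a < 0 := by
  obtain ⟨hb0, hb1⟩ := hb
  set s := Real.sqrt (1 - b ^ 2) with hsdef
  have hs2 : s ^ 2 = 1 - b ^ 2 := Real.sq_sqrt (by nlinarith)
  have hs0 : 0 < s := Real.sqrt_pos.2 (by nlinarith)
  have hs1 : s < 1 := by nlinarith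
  set am : ℝ := (1 - s) / 2 with hamdef
  have ham0 : 0 < am := by rw [hamdef]; linarith
  have ham : am < 1 / 2 := by rw [hamdef]; linarith
  have hama : am < a := ha1
  have hg0 : 4 * am - 4 * am ^ 2 - b ^ 2 = 0 := by
    rw [hamdef]; linear_combination -hs2
  have hqam : qfun b am = -(2 * am * Real.pi) := by
    unfold qfun
    rw [hg0, Real.sqrt_zero]
    simp [Real.arctan_zero]
    ring
  have hgpos : ∀ x ∈ Set.Ioo am (1/2 : ℝ), 0 < 4 * x - 4 * x ^ 2 - b ^ 2 := by
    intro x hx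
    have e : 4 * x - 4 * x ^ 2 - b ^ 2 = 4 * (x - am) * (1 - am - x) := by
      linear_combination hg0
    rw [e]
    have h1 : 0 < x - am := by linarith [hx.1]
    have h2 : 0 < 1 - am - x := by linarith [hx.2]
    positivity
  have hIccIic : Set.Icc am (1/2 : ℝ) ⊆ Set.Iic (1/2 : ℝ) := fun x hx => hx.2
  have hcont : ContinuousOn (qfun b) (Set.Icc am (1/2 : ℝ)) :=
    (qfun_continuousOn b hb0 hb1).mono hIccIic
  have hamIcc : am ∈ Set.Icc am (1/2 : ℝ) := ⟨le_refl _, ham.le⟩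
  have haIcc : a ∈ Set.Icc am (1/2 : ℝ) := ⟨hama.le, ha2⟩
  -- upper bound : qfun strictly decreasing
  have hanti : StrictAntiOn (qfun b) (Set.Icc am (1/2 : ℝ)) := by
    apply strictAntiOn_of_hasDerivWithinAt_neg (convex_Icc _ _) hcont
      (f' := fun x => 4 * Real.arctan (Real.sqrt (4 * x - 4 * x ^ 2 - b ^ 2) / b) - 2 * Real.pi)
    · intro x hx
      rw [interior_Icc] at hx ⊢
      exact (q_hasDerivAt b x hb0 hb1 hx.2.le (hgpos x hx)).hasDerivWithinAt
    · intro x hx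
      rw [interior_Icc] at hx
      have := Real.arctan_lt_pi_div_two (Real.sqrt (4 * x - 4 * x ^ 2 - b ^ 2) / b)
      linarith
  have hupper : qfun b a < 0 := by
    have := hanti hamIcc haIcc hama
    rw [hqam] at this
    have hpi := Real.pi_pos
    nlinarith
  -- lower bound : qfun + 2πx strictly increasing
  have hmono : StrictMonoOn (fun x => qfun b x + 2 * Real.pi * x) (Set.Icc am (1/2 : ℝ)) := by
    apply strictMonoOn_of_hasDerivWithinAt_pos (convex_Icc _ _)
      (hcont.add (continuous_const.mul continuous_id).continuousOn)
      (f' := fun x => 4 * Real.arctan (Real.sqrt (4 * x - 4 * x ^ 2 - b ^ 2) / b))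
    · intro x hx
      rw [interior_Icc] at hx ⊢
      have h := (q_hasDerivAt b x hb0 hb1 hx.2.le (hgpos x hx)).add
        ((hasDerivAt_id x).const_mul (2 * Real.pi))
      have h2 : HasDerivAt (fun x => qfun b x + 2 * Real.pi * x)
          (4 * Real.arctan (Real.sqrt (4 * x - 4 * x ^ 2 - b ^ 2) / b)) x := by
        exact h.congr_deriv (by ring)
      exact h2.hasDerivWithinAt
    · intro x hx
      rw [interior_Icc] at hx
      have : 0 < Real.sqrt (4 * x - 4 * x ^ 2 - b ^ 2) / b :=
        div_pos (Real.sqrt_pos.2 (hgpos x hx)) hb0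
      have := arctan_pos' this
      linarith
  have hlower : -(2 * a * Real.pi) < qfun b a := by
    have := hmono hamIcc haIcc hama
    simp only at this
    rw [hqam] at this
    linarith
  exact ⟨hlower, hupper⟩

lemma sqrt_neg_continuous (a : ℝ) : Continuous fun η : ℝ => Real.sqrt (-η ^ 2 - 4 * a * η) :=
  Real.continuous_sqrt.comp (by continuity)

lemma G_continuousOn (a : ℝ) (ha : 0 < a) :
    ContinuousOn (Gfun a) (Set.Ioo (-4 * a) 0) := by
  have hsq := sqrt_neg_continuous a
  unfold Gfun
  apply ContinuousOn.sub _ hsq.continuousOn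
  apply continuousOn_const.mul
  apply ContinuousOn.sub _ continuousOn_const
  apply continuousOn_const.mul
  exact Real.continuous_arctan.comp_continuousOn
    (hsq.continuousOn.div continuous_neg.continuousOn
      (fun η hη => by have := hη.2; simp only [ne_eq, neg_eq_zero]; linarith))

lemma G_strictMonoOn (a : ℝ) (ha : 0 < a) :
    StrictMonoOn (Gfun a) (Set.Ioo (-4 * a) 0) := by
  apply strictMonoOn_of_hasDerivWithinAt_pos (convex_Ioo _ _) (G_continuousOn a ha)
    (f' := fun η => (η + 4 * a) / Real.sqrt (-η ^ 2 - 4 * a * η))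
  · intro x hx
    rw [interior_Ioo] at hx ⊢
    exact (G_hasDerivAt a x ha hx.1 hx.2).hasDerivWithinAt
  · intro x hx
    rw [interior_Ioo] at hx
    exact div_pos (by linarith [hx.1]) (Real.sqrt_pos.2 (by nlinarith [hx.1, hx.2]))

lemma G_tendsto_left (a : ℝ) (ha : 0 < a) :
    Filter.Tendsto (Gfun a) (nhdsWithin (-4 * a) (Set.Ioi (-4 * a)))
      (nhds (-(2 * a * Real.pi))) := by
  have hsq := sqrt_neg_continuous a
  have hden : -(-4 * a) ≠ 0 := by simp; positivity
  have hca : ContinuousAt (Gfun a) (-4 * a) := by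
    unfold Gfun
    apply ContinuousAt.sub _ hsq.continuousAt
    apply ContinuousAt.mul continuousAt_const
    apply ContinuousAt.sub _ continuousAt_const
    apply ContinuousAt.mul continuousAt_const
    exact Real.continuous_arctan.continuousAt.comp
      ((hsq.continuousAt).div (continuous_neg.continuousAt) hden)
  have hval : Gfun a (-4 * a) = -(2 * a * Real.pi) := by
    unfold Gfun
    rw [show -(-4 * a) ^ 2 - 4 * a * (-4 * a) = 0 by ring, Real.sqrt_zero, zero_div,
      Real.arctan_zero]
    ring
  have h := hca.tendsto.mono_left (nhdsWithin_le_nhds (s := Set.Ioi (-4 * a)))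
  rwa [hval] at h

lemma G_tendsto_right (a : ℝ) (ha : 0 < a) :
    Filter.Tendsto (Gfun a) (nhdsWithin 0 (Set.Iio 0)) (nhds 0) := by
  have hsq := sqrt_neg_continuous a
  have hmem : Set.Ioo (-4 * a) 0 ∈ nhdsWithin (0:ℝ) (Set.Iio 0) :=
    Ioo_mem_nhdsLT_of_mem ⟨by linarith, le_refl 0⟩
  have hneg : Filter.Tendsto (fun η : ℝ => -η) (nhdsWithin (0:ℝ) (Set.Iio 0))
      (nhdsWithin (0:ℝ) (Set.Ioi 0)) := by
    rw [tendsto_nhdsWithin_iff]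
    constructor
    · have := (continuous_neg.tendsto (0:ℝ)).mono_left
        (nhdsWithin_le_nhds (s := Set.Iio (0:ℝ)))
      simpa using this
    · filter_upwards [self_mem_nhdsWithin] with η hη
      simp only [Set.mem_Iio] at hη
      simp only [Set.mem_Ioi]
      linarith
  have hinv : Filter.Tendsto (fun η : ℝ => (-η)⁻¹) (nhdsWithin (0:ℝ) (Set.Iio 0))
      Filter.atTop := tendsto_inv_nhdsGT_zero.comp hneg
  have hmul : Filter.Tendsto (fun η : ℝ => 4 * a * (-η)⁻¹) (nhdsWithin (0:ℝ) (Set.Iio 0))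
      Filter.atTop := hinv.const_mul_atTop (by positivity)
  have hadd : Filter.Tendsto (fun η : ℝ => -1 + 4 * a * (-η)⁻¹)
      (nhdsWithin (0:ℝ) (Set.Iio 0)) Filter.atTop :=
    Filter.tendsto_atTop_add_const_left _ (-1) hmul
  have hsqrtTop : Filter.Tendsto Real.sqrt Filter.atTop Filter.atTop := by
    apply Filter.tendsto_atTop_atTop.2
    intro c
    refine ⟨(max 0 c) ^ 2, fun x hx => le_trans (le_max_right 0 c) ?_⟩
    calc max 0 c = Real.sqrt ((max 0 c) ^ 2) := (Real.sqrt_sq (le_max_left 0 c)).symm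
      _ ≤ Real.sqrt x := Real.sqrt_le_sqrt hx
  have harg : Filter.Tendsto (fun η : ℝ => Real.sqrt (-η ^ 2 - 4 * a * η) / (-η))
      (nhdsWithin (0:ℝ) (Set.Iio 0)) Filter.atTop := by
    apply Filter.Tendsto.congr' _ (hsqrtTop.comp hadd)
    filter_upwards [hmem] with η hη
    have hη0 : η < 0 := hη.2
    have h4 : -4 * a < η := hη.1
    have hηne : η ≠ 0 := hη0.ne
    have e : -1 + 4 * a * (-η)⁻¹ = (-η ^ 2 - 4 * a * η) / η ^ 2 := by
      rw [inv_neg, eq_div_iff (pow_ne_zero 2 hηne)]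
      field_simp
      ring
    simp only [Function.comp]
    rw [e, Real.sqrt_div (by nlinarith) (η ^ 2), Real.sqrt_sq_eq_abs, abs_of_neg hη0]
  have harctan : Filter.Tendsto
      (fun η : ℝ => Real.arctan (Real.sqrt (-η ^ 2 - 4 * a * η) / (-η)))
      (nhdsWithin (0:ℝ) (Set.Iio 0)) (nhds (Real.pi / 2)) :=
    (Real.tendsto_arctan_atTop.mono_right nhdsWithin_le_nhds).comp harg
  have hsqrt0 : Filter.Tendsto (fun η : ℝ => Real.sqrt (-η ^ 2 - 4 * a * η))
      (nhdsWithin (0:ℝ) (Set.Iio 0)) (nhds 0) := by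
    have h := (hsq.tendsto 0).mono_left (nhdsWithin_le_nhds (s := Set.Iio (0:ℝ)))
    have : Real.sqrt (-(0:ℝ) ^ 2 - 4 * a * 0) = 0 := by norm_num
    rwa [this] at h
  have hfinal := (((harctan.const_mul 2).sub_const Real.pi).const_mul (2 * a)).sub hsqrt0
  have : 2 * a * (2 * (Real.pi / 2) - Real.pi) - 0 = 0 := by ring
  rw [this] at hfinal
  exact hfinal

/-- (Theorem 1, case `a_- < a ≤ 1/2`: the equation determining `η`) There exists a
unique `η ∈ (-4a, 0)` with `G(η) = q(a)`. -/
theorem exists_unique_eta (a b : ℝ) (hb : b ∈ Set.Ioo (0 : ℝ) 1)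
    (ha1 : (1 - Real.sqrt (1 - b ^ 2)) / 2 < a) (ha2 : a ≤ 1 / 2) :
    ∃! η : ℝ, η ∈ Set.Ioo (-4 * a) 0 ∧ Gfun a η = qfun b a := by
  obtain ⟨hb0, hb1⟩ := hb
  have hs1 : Real.sqrt (1 - b ^ 2) < 1 := by
    have h1 : Real.sqrt (1 - b ^ 2) < Real.sqrt 1 :=
      Real.sqrt_lt_sqrt (by nlinarith) (by nlinarith)
    simpa using h1
  have ha0 : 0 < a := by linarith
  obtain ⟨hq1, hq2⟩ := q_bounds a b ⟨hb0, hb1⟩ ha1 ha2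
  have hmono := G_strictMonoOn a ha0
  have hcont := G_continuousOn a ha0
  -- point with G < q near -4a
  have hev1 : ∀ᶠ η in nhdsWithin (-4 * a) (Set.Ioi (-4 * a)), Gfun a η < qfun b a :=
    (G_tendsto_left a ha0).eventually_lt_const hq1
  have hmem1 : Set.Ioo (-4 * a) 0 ∈ nhdsWithin (-4 * a) (Set.Ioi (-4 * a)) :=
    Ioo_mem_nhdsGT_of_mem ⟨le_refl _, by linarith⟩
  obtain ⟨η₁, hη₁lt, hη₁mem⟩ :=
    (hev1.and (Filter.eventually_of_mem hmem1 (fun x hx => hx))).exists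
  -- point with G > q near 0
  have hev2 : ∀ᶠ η in nhdsWithin (0:ℝ) (Set.Iio 0), qfun b a < Gfun a η :=
    (G_tendsto_right a ha0).eventually_const_lt hq2
  have hmem2 : Set.Ioo (-4 * a) 0 ∈ nhdsWithin (0:ℝ) (Set.Iio 0) :=
    Ioo_mem_nhdsLT_of_mem ⟨by linarith, le_refl 0⟩
  obtain ⟨η₂, hη₂gt, hη₂mem⟩ :=
    (hev2.and (Filter.eventually_of_mem hmem2 (fun x hx => hx))).exists
  have hlt : η₁ < η₂ := by
    by_contra h
    push_neg at h
    have := hmono.monotoneOn hη₂mem hη₁mem h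
    linarith
  have hIcc : Set.Icc η₁ η₂ ⊆ Set.Ioo (-4 * a) 0 := fun x hx =>
    ⟨lt_of_lt_of_le hη₁mem.1 hx.1, lt_of_le_of_lt hx.2 hη₂mem.2⟩
  have hqmem : qfun b a ∈ Set.Icc (Gfun a η₁) (Gfun a η₂) := ⟨hη₁lt.le, hη₂gt.le⟩
  obtain ⟨η, hηIcc, hηeq⟩ := intermediate_value_Icc hlt.le (hcont.mono hIcc) hqmem
  refine ⟨η, ⟨hIcc hηIcc, hηeq⟩, ?_⟩
  rintro y ⟨hymem, hyeq⟩
  exact hmono.injOn hymem (hIcc hηIcc) (by rw [hyeq, hηeq])
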